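/- arXiv:1102.1023 — 2 statements merged into one kernel-verified Lean document; each statement's English description precedes it below -/
import Mathlib

section
/- Let G ≠ K_6 be a minimal (with respect to vertex count) critical graph satisfying χ(G) = Δ(G) = 6 with the clique number of the subgraph induced on vertices of degree ≥ 6 being at most 1. Then G contains no subgraph isomorphic to K_6 minus an edge. -/
open SimpleGraph

section Aux

variable {V : Type*} [Fintype V] [DecidableEq V]

/-- The "merge `y` into `x`" adjacency relation. -/
private def mergeRel (G : SimpleGraph V) [DecidableRel G.Adj] (x y : V) : V → V → Prop :=
  fun a b => a ≠ b ∧ (G.Adj a b ∨ (a = x ∧ G.Adj y b) ∨ (b = x ∧ G.Adj y a))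

private instance mergeRel.decRel (G : SimpleGraph V) [DecidableRel G.Adj] (x y : V) :
    DecidableRel (mergeRel G x y) := fun a b => by
  unfold mergeRel; infer_instance

private lemma mergeRel.symm (G : SimpleGraph V) [DecidableRel G.Adj] (x y : V) :
    ∀ a b, mergeRel G x y a b → mergeRel G x y b a := by
  rintro a b ⟨hne, h | ⟨h1, h2⟩ | ⟨h1, h2⟩⟩
  · exact ⟨hne.symm, Or.inl h.symm⟩
  · exact ⟨hne.symm, Or.inr (Or.inr ⟨h1, h2⟩)⟩
  · exact ⟨hne.symm, Or.inr (Or.inl ⟨h1, h2⟩)⟩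

private lemma mergeRel.irrefl (G : SimpleGraph V) [DecidableRel G.Adj] (x y : V) :
    ∀ a, ¬ mergeRel G x y a a := by
  rintro a ⟨hne, -⟩; exact hne rfl

/-- Degeneracy core: a non-5-colorable (relational) graph part contains a sub-part with
all degrees at least 5. -/
private lemma degen_core (R : V → V → Prop) [DecidableRel R]
    (hsymm : ∀ a b, R a b → R b a) (hirr : ∀ a, ¬ R a a)
    (T0 : Finset V)
    (h : ¬ ∃ c : V → Fin 5, ∀ a ∈ T0, ∀ b ∈ T0, R a b → c a ≠ c b) :
    ∃ T, T ⊆ T0 ∧ (∀ a ∈ T, 5 ≤ (T.filter (fun b => R a b)).card) ∧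
      ¬ ∃ c : V → Fin 5, ∀ a ∈ T, ∀ b ∈ T, R a b → c a ≠ c b := by
  induction T0 using Finset.strongInduction with
  | _ T0 ih =>
    by_cases hmin : ∀ a ∈ T0, 5 ≤ (T0.filter (fun b => R a b)).card
    · exact ⟨T0, Finset.Subset.refl _, hmin, h⟩
    · push_neg at hmin
      obtain ⟨a, haT, hdeg⟩ := hmin
      have hsmall : ¬ ∃ c : V → Fin 5, ∀ p ∈ T0.erase a, ∀ q ∈ T0.erase a, R p q → c p ≠ c q := by
        rintro ⟨c, hc⟩
        apply h
        have hcard : ((T0.filter (fun b => R a b)).image c).card < 5 :=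
          lt_of_le_of_lt Finset.card_image_le hdeg
        have hnonempty :
            ((Finset.univ : Finset (Fin 5)) \ (T0.filter (fun b => R a b)).image c).Nonempty := by
          rw [← Finset.card_pos,
            Finset.card_sdiff_of_subset (Finset.subset_univ ((T0.filter (fun b => R a b)).image c))]
          simp only [Finset.card_univ, Fintype.card_fin]
          omega
        obtain ⟨k, hk⟩ := hnonempty
        rw [Finset.mem_sdiff] at hk
        have hval : ∀ r, r ∈ T0 → R a r → c r ≠ k := by
          intro r hr hRr hEq
          exact hk.2 (Finset.mem_image.mpr ⟨r, Finset.mem_filter.mpr ⟨hr, hRr⟩, hEq⟩)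
        refine ⟨Function.update c a k, ?_⟩
        intro p hp q hq hpq
        by_cases hpa : p = a
        · by_cases hqa : q = a
          · rw [hpa, hqa] at hpq
            exact absurd hpq (hirr a)
          · rw [hpa, Function.update_self, Function.update_of_ne hqa]
            exact fun hEq => hval q hq (by rwa [hpa] at hpq) hEq.symm
        · by_cases hqa : q = a
          · rw [Function.update_of_ne hpa, hqa, Function.update_self]
            exact hval p hp (hsymm p a (by rwa [hqa] at hpq))
          · rw [Function.update_of_ne hpa, Function.update_of_ne hqa]
            exact hc p (Finset.mem_erase.mpr ⟨hpa, hp⟩) q (Finset.mem_erase.mpr ⟨hqa, hq⟩) hpq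
      obtain ⟨T, hT1, hT2, hT3⟩ := ih (T0.erase a) (Finset.erase_ssubset haT) hsmall
      exact ⟨T, hT1.trans (Finset.erase_subset _ _), hT2, hT3⟩

/-- The patched coloring. -/
private def patch (c : V → Fin 5) (y v1 v2 v3 v4 : V) (k0 d1 d2 d3 k4 : Fin 5) : V → Fin 5 :=
  fun z => if z = y then k0 else if z = v1 then d1 else if z = v2 then d2 else
    if z = v3 then d3 else if z = v4 then k4 else c z

/-- A 5-coloring of the graph minus one vertex, as a total function. -/
private lemma coloring_of_crit (G : SimpleGraph V) [DecidableRel G.Adj]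
    (hk : G.chromaticNumber = 6)
    (hcrit : ∀ v : V, (G.induce ({v}ᶜ : Set V)).chromaticNumber < G.chromaticNumber)
    (v : V) : ∃ c : V → Fin 5, ∀ a b, a ≠ v → b ≠ v → G.Adj a b → c a ≠ c b := by
  have h := hcrit v
  rw [hk] at h
  have hle : (G.induce ({v}ᶜ : Set V)).chromaticNumber ≤ 5 := by
    have : (G.induce ({v}ᶜ : Set V)).chromaticNumber < 5 + 1 := by
      norm_num at h ⊢; exact h
    exact Order.le_of_lt_add_one this
  rw [show ((5:ℕ∞)) = ((5:ℕ):ℕ∞) by norm_num] at hle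
  obtain ⟨c0⟩ := chromaticNumber_le_iff_colorable.mp hle
  refine ⟨fun z => if hz : z = v then (0 : Fin 5) else c0 ⟨z, by simp [hz]⟩, ?_⟩
  intro a b ha hb hadj
  dsimp only
  rw [dif_neg ha, dif_neg hb]
  exact c0.valid (by exact hadj :
    (G.induce ({v}ᶜ : Set V)).Adj ⟨a, by simp [ha]⟩ ⟨b, by simp [hb]⟩)

/-- Main auxiliary lemma: the configuration `K_6 - e` with three low twins is
impossible. -/
private lemma main_aux (G : SimpleGraph V) [DecidableRel G.Adj]
    (hk : G.chromaticNumber = 6) (hΔ : G.maxDegree = 6)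
    (hcrit : ∀ v : V, (G.induce ({v}ᶜ : Set V)).chromaticNumber < G.chromaticNumber)
    (x y v1 v2 v3 v4 : V)
    (hxyne : x ≠ y) (hxy : ¬ G.Adj x y)
    (axv1 : G.Adj x v1) (axv2 : G.Adj x v2) (axv3 : G.Adj x v3) (axv4 : G.Adj x v4)
    (ayv1 : G.Adj y v1) (ayv2 : G.Adj y v2) (ayv3 : G.Adj y v3) (ayv4 : G.Adj y v4)
    (a12 : G.Adj v1 v2) (a13 : G.Adj v1 v3) (a14 : G.Adj v1 v4)
    (a23 : G.Adj v2 v3) (a24 : G.Adj v2 v4) (a34 : G.Adj v3 v4)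
    (hd1 : G.degree v1 ≤ 5) (hd2 : G.degree v2 ≤ 5) (hd3 : G.degree v3 ≤ 5) : False := by
  -- distinctness
  have hxv1 : x ≠ v1 := G.ne_of_adj axv1
  have hxv2 : x ≠ v2 := G.ne_of_adj axv2
  have hxv3 : x ≠ v3 := G.ne_of_adj axv3
  have hxv4 : x ≠ v4 := G.ne_of_adj axv4
  have hyv1 : y ≠ v1 := G.ne_of_adj ayv1
  have hyv2 : y ≠ v2 := G.ne_of_adj ayv2
  have hyv3 : y ≠ v3 := G.ne_of_adj ayv3
  have hyv4 : y ≠ v4 := G.ne_of_adj ayv4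
  have h12 : v1 ≠ v2 := G.ne_of_adj a12
  have h13 : v1 ≠ v3 := G.ne_of_adj a13
  have h14 : v1 ≠ v4 := G.ne_of_adj a14
  have h23 : v2 ≠ v3 := G.ne_of_adj a23
  have h24 : v2 ≠ v4 := G.ne_of_adj a24
  have h34 : v3 ≠ v4 := G.ne_of_adj a34
  -- degrees bounded by 6
  have degx : G.degree x ≤ 6 := hΔ ▸ G.degree_le_maxDegree x
  have degy : G.degree y ≤ 6 := hΔ ▸ G.degree_le_maxDegree y
  have degv4 : G.degree v4 ≤ 6 := hΔ ▸ G.degree_le_maxDegree v4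
  -- card of explicit 5-sets and 4-sets
  have hset5 : ∀ (a b c d e : V), a ≠ b → a ≠ c → a ≠ d → a ≠ e → b ≠ c → b ≠ d → b ≠ e →
      c ≠ d → c ≠ e → d ≠ e → ({a, b, c, d, e} : Finset V).card = 5 := by
    intro a b c d e g1 g2 g3 g4 g5 g6 g7 g8 g9 g10
    rw [Finset.card_insert_of_notMem (by simp [g1, g2, g3, g4]),
        Finset.card_insert_of_notMem (by simp [g5, g6, g7]),
        Finset.card_insert_of_notMem (by simp [g8, g9]),
        Finset.card_insert_of_notMem (by simp [g10]),
        Finset.card_singleton]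
  have hset4 : ({v1, v2, v3, v4} : Finset V).card = 4 := by
    rw [Finset.card_insert_of_notMem (by simp [h12, h13, h14]),
        Finset.card_insert_of_notMem (by simp [h23, h24]),
        Finset.card_insert_of_notMem (by simp [h34]),
        Finset.card_singleton]
  -- neighborhoods of the low twins
  have hnbhd : ∀ u : V, G.degree u ≤ 5 → ∀ s : Finset V, s.card = 5 →
      s ⊆ G.neighborFinset u → G.neighborFinset u = s := by
    intro u hdeg s hcard hsub
    refine (Finset.eq_of_subset_of_card_le hsub ?_).symm
    rw [hcard, G.card_neighborFinset_eq_degree]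
    exact hdeg
  have hnb1 : G.neighborFinset v1 = {x, y, v2, v3, v4} := by
    apply hnbhd v1 hd1 _ (hset5 x y v2 v3 v4 hxyne hxv2 hxv3 hxv4 hyv2 hyv3 hyv4 h23 h24 h34)
    intro z hz
    simp only [Finset.mem_insert, Finset.mem_singleton] at hz
    rw [SimpleGraph.mem_neighborFinset]
    rcases hz with rfl | rfl | rfl | rfl | rfl
    exacts [axv1.symm, ayv1.symm, a12, a13, a14]
  have hnb2 : G.neighborFinset v2 = {x, y, v1, v3, v4} := by
    apply hnbhd v2 hd2 _ (hset5 x y v1 v3 v4 hxyne hxv1 hxv3 hxv4 hyv1 hyv3 hyv4 h13 h14 h34)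
    intro z hz
    simp only [Finset.mem_insert, Finset.mem_singleton] at hz
    rw [SimpleGraph.mem_neighborFinset]
    rcases hz with rfl | rfl | rfl | rfl | rfl
    exacts [axv2.symm, ayv2.symm, a12.symm, a23, a24]
  have hnb3 : G.neighborFinset v3 = {x, y, v1, v2, v4} := by
    apply hnbhd v3 hd3 _ (hset5 x y v1 v2 v4 hxyne hxv1 hxv2 hxv4 hyv1 hyv2 hyv4 h12 h14 h24)
    intro z hz
    simp only [Finset.mem_insert, Finset.mem_singleton] at hz
    rw [SimpleGraph.mem_neighborFinset]
    rcases hz with rfl | rfl | rfl | rfl | rfl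
    exacts [axv3.symm, ayv3.symm, a13.symm, a23.symm, a34]
  have hn1 : ∀ z, G.Adj v1 z → z = x ∨ z = y ∨ z = v2 ∨ z = v3 ∨ z = v4 := by
    intro z hz
    have hmem : z ∈ G.neighborFinset v1 := (SimpleGraph.mem_neighborFinset _ _ _).mpr hz
    rw [hnb1] at hmem
    simpa using hmem
  have hn2 : ∀ z, G.Adj v2 z → z = x ∨ z = y ∨ z = v1 ∨ z = v3 ∨ z = v4 := by
    intro z hz
    have hmem : z ∈ G.neighborFinset v2 := (SimpleGraph.mem_neighborFinset _ _ _).mpr hz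
    rw [hnb2] at hmem
    simpa using hmem
  have hn3 : ∀ z, G.Adj v3 z → z = x ∨ z = y ∨ z = v1 ∨ z = v2 ∨ z = v4 := by
    intro z hz
    have hmem : z ∈ G.neighborFinset v3 := (SimpleGraph.mem_neighborFinset _ _ _).mpr hz
    rw [hnb3] at hmem
    simpa using hmem
  -- the outside neighbors of v4
  have hS5sub : ({x, y, v1, v2, v3} : Finset V) ⊆ G.neighborFinset v4 := by
    intro z hz
    simp only [Finset.mem_insert, Finset.mem_singleton] at hz
    rw [SimpleGraph.mem_neighborFinset]
    rcases hz with rfl | rfl | rfl | rfl | rfl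
    exacts [axv4.symm, ayv4.symm, a14.symm, a24.symm, a34.symm]
  have hS5card : ({x, y, v1, v2, v3} : Finset V).card = 5 :=
    hset5 x y v1 v2 v3 hxyne hxv1 hxv2 hxv3 hyv1 hyv2 hyv3 h12 h13 h23
  have hNoutcard : (G.neighborFinset v4 \ ({x, y, v1, v2, v3} : Finset V)).card ≤ 1 := by
    rw [Finset.card_sdiff_of_subset hS5sub, hS5card, G.card_neighborFinset_eq_degree]
    omega
  have hv4mem : ∀ z, G.Adj v4 z → z ∈ ({x, y, v1, v2, v3} : Finset V) ∨
      z ∈ G.neighborFinset v4 \ ({x, y, v1, v2, v3} : Finset V) := by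
    intro z hz
    by_cases h : z ∈ ({x, y, v1, v2, v3} : Finset V)
    · exact Or.inl h
    · exact Or.inr (Finset.mem_sdiff.mpr ⟨(SimpleGraph.mem_neighborFinset _ _ _).mpr hz, h⟩)
  -- the vertex set W (everything except y, v1, v2, v3, v4)
  have hmemW : ∀ z : V, z ≠ y → z ≠ v1 → z ≠ v2 → z ≠ v3 → z ≠ v4 →
      z ∈ Finset.univ \ ({y, v1, v2, v3, v4} : Finset V) := by
    intro z g1 g2 g3 g4 g5
    simp [g1, g2, g3, g4, g5]
  have hWmem : ∀ z ∈ Finset.univ \ ({y, v1, v2, v3, v4} : Finset V),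
      z ≠ y ∧ z ≠ v1 ∧ z ≠ v2 ∧ z ≠ v3 ∧ z ≠ v4 := by
    intro z hz
    simp only [Finset.mem_sdiff, Finset.mem_univ, true_and, Finset.mem_insert,
      Finset.mem_singleton] at hz
    push_neg at hz
    exact hz
  have hxW : x ∈ Finset.univ \ ({y, v1, v2, v3, v4} : Finset V) :=
    hmemW x hxyne hxv1 hxv2 hxv3 hxv4
  -- Step 1: the merged graph restricted to W has no proper 5-colouring
  have hnoW : ¬ ∃ c : V → Fin 5, ∀ a ∈ Finset.univ \ ({y, v1, v2, v3, v4} : Finset V),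
      ∀ b ∈ Finset.univ \ ({y, v1, v2, v3, v4} : Finset V), mergeRel G x y a b → c a ≠ c b := by
    rintro ⟨c, hc⟩
    -- choose a colour for v4
    have hbadcard : (insert (c x) ((G.neighborFinset v4 \
        ({x, y, v1, v2, v3} : Finset V)).image c)).card ≤ 2 := by
      have h1 := Finset.card_insert_le (c x)
        ((G.neighborFinset v4 \ ({x, y, v1, v2, v3} : Finset V)).image c)
      have h2 := Finset.card_image_le (s := G.neighborFinset v4 \
        ({x, y, v1, v2, v3} : Finset V)) (f := c)
      omega
    have hex4 : ((Finset.univ : Finset (Fin 5)) \ insert (c x) ((G.neighborFinset v4 \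
        ({x, y, v1, v2, v3} : Finset V)).image c)).Nonempty := by
      rw [← Finset.card_pos, Finset.card_sdiff_of_subset (Finset.subset_univ _)]
      simp only [Finset.card_univ, Fintype.card_fin]
      omega
    obtain ⟨k4, hk4⟩ := hex4
    rw [Finset.mem_sdiff, Finset.mem_insert] at hk4
    push_neg at hk4
    obtain ⟨-, hk4x, hk4out⟩ := hk4
    -- three remaining colours
    have hpaircard : ({c x, k4} : Finset (Fin 5)).card = 2 := by
      rw [Finset.card_insert_of_notMem (by simpa using Ne.symm hk4x), Finset.card_singleton]
    have hremcard : ((Finset.univ : Finset (Fin 5)) \ {c x, k4}).card = 3 := by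
      rw [Finset.card_sdiff_of_subset (Finset.subset_univ _), hpaircard]
      simp
    obtain ⟨d1, hd1mem⟩ := Finset.card_pos.mp (by omega :
      0 < ((Finset.univ : Finset (Fin 5)) \ {c x, k4}).card)
    obtain ⟨d2, hd2mem'⟩ := Finset.card_pos.mp (show
        0 < (((Finset.univ : Finset (Fin 5)) \ {c x, k4}) \ {d1}).card by
      rw [Finset.card_sdiff_of_subset (by simpa using hd1mem), Finset.card_singleton, hremcard]
      omega)
    rw [Finset.mem_sdiff, Finset.mem_singleton] at hd2mem'
    obtain ⟨hd2mem, hd21⟩ := hd2mem'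
    obtain ⟨d3, hd3mem'⟩ := Finset.card_pos.mp (show
        0 < (((Finset.univ : Finset (Fin 5)) \ {c x, k4}) \ {d1, d2}).card by
      rw [Finset.card_sdiff_of_subset (by
        intro t ht
        simp only [Finset.mem_insert, Finset.mem_singleton] at ht
        rcases ht with rfl | rfl
        exacts [hd1mem, hd2mem])]
      have hc2 : ({d1, d2} : Finset (Fin 5)).card ≤ 2 := Finset.card_insert_le _ _ |>.trans
        (by rw [Finset.card_singleton])
      omega)
    rw [Finset.mem_sdiff] at hd3mem'
    obtain ⟨hd3mem, hd3n⟩ := hd3mem'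
    simp only [Finset.mem_insert, Finset.mem_singleton] at hd3n
    push_neg at hd3n
    obtain ⟨hd31, hd32⟩ := hd3n
    have hremx : ∀ d ∈ (Finset.univ : Finset (Fin 5)) \ {c x, k4}, d ≠ c x ∧ d ≠ k4 := by
      intro d hd
      simp only [Finset.mem_sdiff, Finset.mem_univ, true_and, Finset.mem_insert,
        Finset.mem_singleton] at hd
      push_neg at hd
      exact hd
    obtain ⟨hd1x, hd1k⟩ := hremx d1 hd1mem
    obtain ⟨hd2x, hd2k⟩ := hremx d2 hd2mem
    obtain ⟨hd3x, hd3k⟩ := hremx d3 hd3mem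
    -- the patched colouring
    set ct : V → Fin 5 := patch c y v1 v2 v3 v4 (c x) d1 d2 d3 k4 with hct
    have ey : ct y = c x := by
      rw [hct]; unfold patch; rw [if_pos rfl]
    have e1 : ct v1 = d1 := by
      rw [hct]; unfold patch
      rw [if_neg (Ne.symm hyv1), if_pos rfl]
    have e2 : ct v2 = d2 := by
      rw [hct]; unfold patch
      rw [if_neg (Ne.symm hyv2), if_neg (Ne.symm h12), if_pos rfl]
    have e3 : ct v3 = d3 := by
      rw [hct]; unfold patch
      rw [if_neg (Ne.symm hyv3), if_neg (Ne.symm h13), if_neg (Ne.symm h23), if_pos rfl]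
    have e4 : ct v4 = k4 := by
      rw [hct]; unfold patch
      rw [if_neg (Ne.symm hyv4), if_neg (Ne.symm h14), if_neg (Ne.symm h24),
        if_neg (Ne.symm h34), if_pos rfl]
    have ew : ∀ z : V, z ≠ y → z ≠ v1 → z ≠ v2 → z ≠ v3 → z ≠ v4 → ct z = c z := by
      intro z g1 g2 g3 g4 g5
      rw [hct]; unfold patch
      rw [if_neg g1, if_neg g2, if_neg g3, if_neg g4, if_neg g5]
    have ex : ct x = c x := ew x hxyne hxv1 hxv2 hxv3 hxv4
    -- properness at the special vertices
    have hay : ∀ z, G.Adj y z → ct y ≠ ct z := by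
      intro z hz
      rw [ey]
      by_cases g1 : z = v1
      · rw [g1, e1]; exact Ne.symm hd1x
      by_cases g2 : z = v2
      · rw [g2, e2]; exact Ne.symm hd2x
      by_cases g3 : z = v3
      · rw [g3, e3]; exact Ne.symm hd3x
      by_cases g4 : z = v4
      · rw [g4, e4]; exact Ne.symm hk4x
      have hzy : z ≠ y := fun h => G.irrefl (h ▸ hz)
      have hzx : z ≠ x := by rintro rfl; exact hxy hz.symm
      rw [ew z hzy g1 g2 g3 g4]
      exact hc x hxW z (hmemW z hzy g1 g2 g3 g4)
        (by unfold mergeRel; exact ⟨Ne.symm hzx, Or.inr (Or.inl ⟨rfl, hz⟩)⟩)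
    have ha1 : ∀ z, G.Adj v1 z → ct v1 ≠ ct z := by
      intro z hz
      rw [e1]
      rcases hn1 z hz with rfl | rfl | rfl | rfl | rfl
      · rw [ex]; exact hd1x
      · rw [ey]; exact hd1x
      · rw [e2]; exact Ne.symm hd21
      · rw [e3]; exact Ne.symm hd31
      · rw [e4]; exact hd1k
    have ha2 : ∀ z, G.Adj v2 z → ct v2 ≠ ct z := by
      intro z hz
      rw [e2]
      rcases hn2 z hz with rfl | rfl | rfl | rfl | rfl
      · rw [ex]; exact hd2x
      · rw [ey]; exact hd2x
      · rw [e1]; exact hd21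
      · rw [e3]; exact Ne.symm hd32
      · rw [e4]; exact hd2k
    have ha3 : ∀ z, G.Adj v3 z → ct v3 ≠ ct z := by
      intro z hz
      rw [e3]
      rcases hn3 z hz with rfl | rfl | rfl | rfl | rfl
      · rw [ex]; exact hd3x
      · rw [ey]; exact hd3x
      · rw [e1]; exact hd31
      · rw [e2]; exact hd32
      · rw [e4]; exact hd3k
    have ha4 : ∀ z, G.Adj v4 z → ct v4 ≠ ct z := by
      intro z hz
      rw [e4]
      rcases hv4mem z hz with hS | hN
      · simp only [Finset.mem_insert, Finset.mem_singleton] at hS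
        rcases hS with rfl | rfl | rfl | rfl | rfl
        · rw [ex]; exact hk4x
        · rw [ey]; exact hk4x
        · rw [e1]; exact Ne.symm hd1k
        · rw [e2]; exact Ne.symm hd2k
        · rw [e3]; exact Ne.symm hd3k
      · have hzn := Finset.mem_sdiff.mp hN
        obtain ⟨-, hznS⟩ := hzn
        simp only [Finset.mem_insert, Finset.mem_singleton] at hznS
        push_neg at hznS
        obtain ⟨hzx, hzy, hz1, hz2, hz3⟩ := hznS
        have hz4 : z ≠ v4 := (G.ne_of_adj hz).symm
        rw [ew z hzy hz1 hz2 hz3 hz4]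
        intro hEq
        exact hk4out (Finset.mem_image.mpr ⟨z, hN, hEq.symm⟩)
    -- global properness
    have hproper : ∀ a b, G.Adj a b → ct a ≠ ct b := by
      have haux : ∀ a, (a = y ∨ a = v1 ∨ a = v2 ∨ a = v3 ∨ a = v4) →
          ∀ b, G.Adj a b → ct a ≠ ct b := by
        rintro a (rfl | rfl | rfl | rfl | rfl)
        exacts [hay, ha1, ha2, ha3, ha4]
      intro a b hab
      by_cases ha : a = y ∨ a = v1 ∨ a = v2 ∨ a = v3 ∨ a = v4
      · exact haux a ha b hab
      by_cases hb : b = y ∨ b = v1 ∨ b = v2 ∨ b = v3 ∨ b = v4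
      · exact (haux b hb a hab.symm).symm
      push_neg at ha hb
      obtain ⟨ga1, ga2, ga3, ga4, ga5⟩ := ha
      obtain ⟨gb1, gb2, gb3, gb4, gb5⟩ := hb
      rw [ew a ga1 ga2 ga3 ga4 ga5, ew b gb1 gb2 gb3 gb4 gb5]
      exact hc a (hmemW a ga1 ga2 ga3 ga4 ga5) b (hmemW b gb1 gb2 gb3 gb4 gb5)
        (by unfold mergeRel; exact ⟨G.ne_of_adj hab, Or.inl hab⟩)
    have hcol : G.Colorable 5 := ⟨SimpleGraph.Coloring.mk ct fun h => hproper _ _ h⟩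
    have hle := hcol.chromaticNumber_le
    rw [hk] at hle
    norm_num at hle
  -- Step 2: degeneracy gives a min-degree-5 core avoiding the merged vertex
  obtain ⟨T, hTW, hTdeg, hTno⟩ := degen_core (mergeRel G x y) (mergeRel.symm G x y)
    (mergeRel.irrefl G x y) (Finset.univ \ ({y, v1, v2, v3, v4} : Finset V)) hnoW
  have hxT : x ∉ T := by
    intro hxT
    have h5 := hTdeg x hxT
    have hvs4x : ({v1, v2, v3, v4} : Finset V) ⊆ G.neighborFinset x := by
      intro z hz
      simp only [Finset.mem_insert, Finset.mem_singleton] at hz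
      rw [SimpleGraph.mem_neighborFinset]
      rcases hz with rfl | rfl | rfl | rfl
      exacts [axv1, axv2, axv3, axv4]
    have hvs4y : ({v1, v2, v3, v4} : Finset V) ⊆ G.neighborFinset y := by
      intro z hz
      simp only [Finset.mem_insert, Finset.mem_singleton] at hz
      rw [SimpleGraph.mem_neighborFinset]
      rcases hz with rfl | rfl | rfl | rfl
      exacts [ayv1, ayv2, ayv3, ayv4]
    have hsubU : T.filter (fun b => mergeRel G x y x b) ⊆
        (G.neighborFinset x \ {v1, v2, v3, v4}) ∪ (G.neighborFinset y \ {v1, v2, v3, v4}) := by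
      intro b hb
      rw [Finset.mem_filter] at hb
      obtain ⟨hbT, hbR⟩ := hb
      unfold mergeRel at hbR
      obtain ⟨hbne, hbor⟩ := hbR
      obtain ⟨-, hb1, hb2, hb3, hb4⟩ := hWmem b (hTW hbT)
      have hbnot : b ∉ ({v1, v2, v3, v4} : Finset V) := by simp [hb1, hb2, hb3, hb4]
      rcases hbor with h | ⟨-, h⟩ | ⟨hbx, -⟩
      · exact Finset.mem_union_left _
          (Finset.mem_sdiff.mpr ⟨(SimpleGraph.mem_neighborFinset _ _ _).mpr h, hbnot⟩)
      · exact Finset.mem_union_right _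
          (Finset.mem_sdiff.mpr ⟨(SimpleGraph.mem_neighborFinset _ _ _).mpr h, hbnot⟩)
      · exact absurd hbx (Ne.symm hbne)
    have c1 : (G.neighborFinset x \ ({v1, v2, v3, v4} : Finset V)).card ≤ 2 := by
      rw [Finset.card_sdiff_of_subset hvs4x, hset4, G.card_neighborFinset_eq_degree]
      omega
    have c2 : (G.neighborFinset y \ ({v1, v2, v3, v4} : Finset V)).card ≤ 2 := by
      rw [Finset.card_sdiff_of_subset hvs4y, hset4, G.card_neighborFinset_eq_degree]
      omega
    have c3 := Finset.card_le_card hsubU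
    have c4 := Finset.card_union_le (G.neighborFinset x \ ({v1, v2, v3, v4} : Finset V))
      (G.neighborFinset y \ ({v1, v2, v3, v4} : Finset V))
    omega
  -- Step 3: but criticality at v1 5-colours T, contradiction
  obtain ⟨c0, hc0⟩ := coloring_of_crit G hk hcrit v1
  apply hTno
  refine ⟨c0, ?_⟩
  intro a ha b hb hab
  obtain ⟨-, ha1', -, -, -⟩ := hWmem a (hTW ha)
  obtain ⟨-, hb1', -, -, -⟩ := hWmem b (hTW hb)
  unfold mergeRel at hab
  obtain ⟨-, hor⟩ := hab
  have hax : a ≠ x := fun h => hxT (h ▸ ha)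
  have hbx : b ≠ x := fun h => hxT (h ▸ hb)
  have hadj : G.Adj a b := by
    rcases hor with h | ⟨h, -⟩ | ⟨h, -⟩
    · exact h
    · exact absurd h hax
    · exact absurd h hbx
  exact hc0 a b ha1' hb1' hadj

end Aux

/-- If `G ≠ K_6` is a vertex-minimal critical graph with `χ(G) = Δ(G) = 6`
and the vertices of degree at least `6` independent, then `G` contains no
subgraph isomorphic to `K_6` minus an edge. -/
theorem stmt_4 {V : Type*} [Fintype V] [DecidableEq V] (G : SimpleGraph V)
    [DecidableRel G.Adj]
    (hk : G.chromaticNumber = 6) (hΔ : G.maxDegree = 6)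
    (hcrit : ∀ v : V, (G.induce ({v}ᶜ : Set V)).chromaticNumber < G.chromaticNumber)
    (hind : ∀ u v : V, 6 ≤ G.degree u → 6 ≤ G.degree v → ¬ G.Adj u v)
    (hne : IsEmpty (G ≃g (⊤ : SimpleGraph (Fin 6))))
    -- minimality: every graph on fewer vertices which is critical with
    -- `χ ≥ Δ ≥ 6` and the high vertices independent is complete
    (hminimal : ∀ (W : Type) [Fintype W] [DecidableEq W]
      (G' : SimpleGraph W) [DecidableRel G'.Adj] (k' : ℕ),
      Fintype.card W < Fintype.card V →
      G'.chromaticNumber = k' →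
      (∀ w : W, (G'.induce ({w}ᶜ : Set W)).chromaticNumber < G'.chromaticNumber) →
      G'.maxDegree ≤ k' → 6 ≤ G'.maxDegree →
      (∀ u w : W, k' ≤ G'.degree u → k' ≤ G'.degree w → ¬ G'.Adj u w) →
      Nonempty (G' ≃g (⊤ : SimpleGraph (Fin k')))) :
    -- conclusion: `G` contains no `K_6 - e`
    ¬ ∃ f : Fin 6 → V, Function.Injective f ∧
        ∀ i j : Fin 6, i ≠ j → ¬(i = 0 ∧ j = 1) → ¬(i = 1 ∧ j = 0) →
          G.Adj (f i) (f j) := by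
  rintro ⟨f, finj, hadj⟩
  by_cases hxy : G.Adj (f 0) (f 1)
  · -- then `G` contains `K_6`
    have hall : ∀ i j : Fin 6, i ≠ j → G.Adj (f i) (f j) := by
      intro i j hij
      by_cases h01 : i = 0 ∧ j = 1
      · rw [h01.1, h01.2]; exact hxy
      by_cases h10 : i = 1 ∧ j = 0
      · rw [h10.1, h10.2]; exact hxy.symm
      exact hadj i j hij h01 h10
    by_cases hsurj : ∀ u : V, ∃ i, f i = u
    · -- `G = K_6`, contradicting `hne`
      have hbij : Function.Bijective f := ⟨finj, hsurj⟩
      let e := Equiv.ofBijective f hbij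
      refine hne.false ⟨e.symm, @fun a b => ?_⟩
      simp only [top_adj]
      constructor
      · intro hne'
        have h := hall (e.symm a) (e.symm b) hne'
        have ha : f (e.symm a) = a := e.apply_symm_apply a
        have hb : f (e.symm b) = b := e.apply_symm_apply b
        rwa [ha, hb] at h
      · intro hGab hEq
        exact G.ne_of_adj hGab (e.symm.injective hEq)
    · -- a vertex outside the `K_6`: deleting it keeps a `K_6`, contradicting criticality
      push_neg at hsurj
      obtain ⟨u, hu⟩ := hsurj
      obtain ⟨c0, hc0⟩ := coloring_of_crit G hk hcrit u
      have hinj : Function.Injective (fun i : Fin 6 => c0 (f i)) := by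
        intro i j hEq
        by_contra hij
        exact hc0 (f i) (f j) (hu i) (hu j) (hall i j hij) hEq
      have := Fintype.card_le_of_injective _ hinj
      simp at this
  · -- the `K_6 - e` case: find three low twins among `f 2, f 3, f 4, f 5`
    have hadj' : ∀ i j : Fin 6, i ≠ 0 → i ≠ 1 → j ≠ 0 → j ≠ 1 → i ≠ j → G.Adj (f i) (f j) :=
      fun i j hi0 hi1 _ _ hij => hadj i j hij (fun h => hi0 h.1) (fun h => hi1 h.1)
    obtain ⟨j0, hj0mem, hlow⟩ : ∃ j0 : Fin 6, (j0 = 2 ∨ j0 = 3 ∨ j0 = 4 ∨ j0 = 5) ∧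
        ∀ i : Fin 6, (i = 2 ∨ i = 3 ∨ i = 4 ∨ i = 5) → i ≠ j0 → G.degree (f i) ≤ 5 := by
      by_cases hex : ∃ j : Fin 6, (j = 2 ∨ j = 3 ∨ j = 4 ∨ j = 5) ∧ 6 ≤ G.degree (f j)
      · obtain ⟨j, hjm, hjd⟩ := hex
        refine ⟨j, hjm, fun i him hij => ?_⟩
        by_contra hnot
        have h6 : 6 ≤ G.degree (f i) := by omega
        refine hind _ _ h6 hjd ?_
        have hi0 : i ≠ 0 := by rcases him with rfl | rfl | rfl | rfl <;> decide
        have hi1 : i ≠ 1 := by rcases him with rfl | rfl | rfl | rfl <;> decide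
        have hj0 : j ≠ 0 := by rcases hjm with rfl | rfl | rfl | rfl <;> decide
        have hj1 : j ≠ 1 := by rcases hjm with rfl | rfl | rfl | rfl <;> decide
        exact hadj' i j hi0 hi1 hj0 hj1 hij
      · push_neg at hex
        refine ⟨5, by tauto, fun i him _ => ?_⟩
        have := hex i him
        omega
    have hf01 : f 0 ≠ f 1 := fun h => absurd (finj h) (by decide)
    rcases hj0mem with rfl | rfl | rfl | rfl
    · exact main_aux G hk hΔ hcrit (f 0) (f 1) (f 3) (f 4) (f 5) (f 2) hf01 hxy
        (hadj 0 3 (by decide) (by decide) (by decide)) (hadj 0 4 (by decide) (by decide) (by decide))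
        (hadj 0 5 (by decide) (by decide) (by decide)) (hadj 0 2 (by decide) (by decide) (by decide))
        (hadj 1 3 (by decide) (by decide) (by decide)) (hadj 1 4 (by decide) (by decide) (by decide))
        (hadj 1 5 (by decide) (by decide) (by decide)) (hadj 1 2 (by decide) (by decide) (by decide))
        (hadj 3 4 (by decide) (by decide) (by decide)) (hadj 3 5 (by decide) (by decide) (by decide))
        (hadj 3 2 (by decide) (by decide) (by decide)) (hadj 4 5 (by decide) (by decide) (by decide))
        (hadj 4 2 (by decide) (by decide) (by decide)) (hadj 5 2 (by decide) (by decide) (by decide))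
        (hlow 3 (by tauto) (by decide)) (hlow 4 (by tauto) (by decide)) (hlow 5 (by tauto) (by decide))
    · exact main_aux G hk hΔ hcrit (f 0) (f 1) (f 2) (f 4) (f 5) (f 3) hf01 hxy
        (hadj 0 2 (by decide) (by decide) (by decide)) (hadj 0 4 (by decide) (by decide) (by decide))
        (hadj 0 5 (by decide) (by decide) (by decide)) (hadj 0 3 (by decide) (by decide) (by decide))
        (hadj 1 2 (by decide) (by decide) (by decide)) (hadj 1 4 (by decide) (by decide) (by decide))
        (hadj 1 5 (by decide) (by decide) (by decide)) (hadj 1 3 (by decide) (by decide) (by decide))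
        (hadj 2 4 (by decide) (by decide) (by decide)) (hadj 2 5 (by decide) (by decide) (by decide))
        (hadj 2 3 (by decide) (by decide) (by decide)) (hadj 4 5 (by decide) (by decide) (by decide))
        (hadj 4 3 (by decide) (by decide) (by decide)) (hadj 5 3 (by decide) (by decide) (by decide))
        (hlow 2 (by tauto) (by decide)) (hlow 4 (by tauto) (by decide)) (hlow 5 (by tauto) (by decide))
    · exact main_aux G hk hΔ hcrit (f 0) (f 1) (f 2) (f 3) (f 5) (f 4) hf01 hxy
        (hadj 0 2 (by decide) (by decide) (by decide)) (hadj 0 3 (by decide) (by decide) (by decide))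
        (hadj 0 5 (by decide) (by decide) (by decide)) (hadj 0 4 (by decide) (by decide) (by decide))
        (hadj 1 2 (by decide) (by decide) (by decide)) (hadj 1 3 (by decide) (by decide) (by decide))
        (hadj 1 5 (by decide) (by decide) (by decide)) (hadj 1 4 (by decide) (by decide) (by decide))
        (hadj 2 3 (by decide) (by decide) (by decide)) (hadj 2 5 (by decide) (by decide) (by decide))
        (hadj 2 4 (by decide) (by decide) (by decide)) (hadj 3 5 (by decide) (by decide) (by decide))
        (hadj 3 4 (by decide) (by decide) (by decide)) (hadj 5 4 (by decide) (by decide) (by decide))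
        (hlow 2 (by tauto) (by decide)) (hlow 3 (by tauto) (by decide)) (hlow 5 (by tauto) (by decide))
    · exact main_aux G hk hΔ hcrit (f 0) (f 1) (f 2) (f 3) (f 4) (f 5) hf01 hxy
        (hadj 0 2 (by decide) (by decide) (by decide)) (hadj 0 3 (by decide) (by decide) (by decide))
        (hadj 0 4 (by decide) (by decide) (by decide)) (hadj 0 5 (by decide) (by decide) (by decide))
        (hadj 1 2 (by decide) (by decide) (by decide)) (hadj 1 3 (by decide) (by decide) (by decide))
        (hadj 1 4 (by decide) (by decide) (by decide)) (hadj 1 5 (by decide) (by decide) (by decide))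
        (hadj 2 3 (by decide) (by decide) (by decide)) (hadj 2 4 (by decide) (by decide) (by decide))
        (hadj 2 5 (by decide) (by decide) (by decide)) (hadj 3 4 (by decide) (by decide) (by decide))
        (hadj 3 5 (by decide) (by decide) (by decide)) (hadj 4 5 (by decide) (by decide) (by decide))
        (hlow 2 (by tauto) (by decide)) (hlow 3 (by tauto) (by decide)) (hlow 4 (by tauto) (by decide))
end

section
/- There exists a graph G with χ(G) = 5, Ore-degree θ(G) = 9 (so χ(G) = ⌊θ(G)/2⌋ + 1 = 5), containing no K_5. (Hence the bound χ(G) ≥ 6 in 'if 6 ≤ χ(G) = ⌊θ(G)/2⌋ + 1 then K_{χ(G)} ⊆ G' is sharp.) -/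
/-!
Take two copies of `K₄` and a vertex `w` whose non-neighbours in the first copy are all adjacent
to its non-neighbours in the second. In a 4-colouring each `K₄` uses every colour, so the colour
of `w` reappears on a non-neighbour in each copy; these two vertices are adjacent, a contradiction.
Below `w = 8` has the single non-neighbour `0` in `{0,1,2,3}` and the non-neighbours `4, 5` in
`{4,5,6,7}`, both joined to `0`. Only `0` and `8` have degree `5`, and they are not adjacent.
-/

open SimpleGraph Finset

namespace SimpleGraph

variable {V : Type*} {G : SimpleGraph V}

lemma ncard_neighborSet_eq_degree (v : V) [Fintype (G.neighborSet v)] :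
    (G.neighborSet v).ncard = G.degree v := by
  rw [← Nat.card_coe_set_eq, Nat.card_eq_fintype_card, card_neighborSet_eq_degree]

lemma Coloring.exists_nonadj_mem_color_eq {α : Type*} [Fintype α] (C : G.Coloring α)
    {s : Finset V} (hs : G.IsClique (s : Set V)) (hcard : Fintype.card α ≤ #s) (w : V) :
    ∃ v ∈ s, ¬G.Adj v w ∧ C v = C w := by
  obtain ⟨v, hv, hcol⟩ := C.surjOn_of_card_le_isClique hs hcard (Set.mem_univ (C w))
  exact ⟨v, hv, fun hadj => C.valid hadj hcol, hcol⟩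

lemma not_colorable_of_isClique_of_nonadj_adj {s t : Finset V} {w : V} {n : ℕ}
    (hs : G.IsClique (s : Set V)) (hsn : n ≤ #s) (ht : G.IsClique (t : Set V)) (htn : n ≤ #t)
    (hadj : ∀ v ∈ s, ∀ u ∈ t, ¬G.Adj v w → ¬G.Adj u w → G.Adj v u) :
    ¬G.Colorable n := by
  rintro ⟨C⟩
  rw [← Fintype.card_fin n] at hsn htn
  obtain ⟨v, hv, hvw, hCv⟩ := C.exists_nonadj_mem_color_eq hs hsn w
  obtain ⟨u, hu, huw, hCu⟩ := C.exists_nonadj_mem_color_eq ht htn w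
  exact C.valid (hadj v hv u hu hvw huw) (hCv.trans hCu.symm)

end SimpleGraph

def sharpOreEdges : List (Fin 9 × Fin 9) :=
  [(0,1), (0,2), (0,3), (1,2), (1,3), (2,3), (4,5), (4,6), (4,7), (5,6), (5,7), (6,7),
   (0,4), (0,5), (8,1), (8,2), (8,3), (8,6), (8,7)]

def sharpOreGraph : SimpleGraph (Fin 9) := SimpleGraph.fromRel (fun x y => (x, y) ∈ sharpOreEdges)

instance : DecidableRel sharpOreGraph.Adj := fun x y =>
  inferInstanceAs (Decidable (x ≠ y ∧ ((x, y) ∈ sharpOreEdges ∨ (y, x) ∈ sharpOreEdges)))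

lemma sharpOreGraph_colorable_five : sharpOreGraph.Colorable 5 :=
  ⟨Coloring.mk ![0, 1, 2, 3, 1, 2, 0, 3, 4] (by decide)⟩

lemma sharpOreGraph_not_colorable_four : ¬sharpOreGraph.Colorable 4 :=
  not_colorable_of_isClique_of_nonadj_adj (s := {0, 1, 2, 3}) (t := {4, 5, 6, 7}) (w := 8)
    (by decide) (by decide) (by decide) (by decide) (by decide)

lemma sharpOreGraph_chromaticNumber : sharpOreGraph.chromaticNumber = 5 :=
  chromaticNumber_eq_iff_colorable_not_colorable.mpr
    ⟨sharpOreGraph_colorable_five, sharpOreGraph_not_colorable_four⟩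

lemma sharpOreGraph_degree_add_degree_le {x y : Fin 9} (h : sharpOreGraph.Adj x y) :
    sharpOreGraph.degree x + sharpOreGraph.degree y ≤ 9 := by
  revert x y
  decide

lemma sharpOreGraph_degree_add_degree_zero_one :
    sharpOreGraph.degree 0 + sharpOreGraph.degree 1 = 9 := by
  decide

set_option maxRecDepth 10000 in
lemma sharpOreGraph_cliqueFree_five : sharpOreGraph.CliqueFree 5 := by
  unfold CliqueFree
  decide

/-- There is a graph `G` with `χ(G) = 5`, Ore-degree `θ(G) = 9`
(so `χ(G) = ⌊θ(G)/2⌋ + 1`), containing no `K_5`: the bound `χ(G) ≥ 6`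
in Corollary O is sharp. -/
theorem stmt_13 :
    ∃ (G : SimpleGraph (Fin 9)),
      G.chromaticNumber = 5 ∧
      (∀ x y : Fin 9, G.Adj x y →
        (G.neighborSet x).ncard + (G.neighborSet y).ncard ≤ 9) ∧
      (∃ x y : Fin 9, G.Adj x y ∧
        (G.neighborSet x).ncard + (G.neighborSet y).ncard = 9) ∧
      ¬ ∃ s : Finset (Fin 9), G.IsNClique 5 s := by
  refine ⟨sharpOreGraph, sharpOreGraph_chromaticNumber, fun x y hxy => ?_, ⟨0, 1, by decide, ?_⟩,
    fun ⟨s, hs⟩ => sharpOreGraph_cliqueFree_five s hs⟩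
  all_goals rw [ncard_neighborSet_eq_degree, ncard_neighborSet_eq_degree]
  · exact sharpOreGraph_degree_add_degree_le hxy
  · exact sharpOreGraph_degree_add_degree_zero_one
end
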